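/- arXiv:2306.06185 — 2 statements merged into one kernel-verified Lean document; each statement's English description precedes it below -/
import Mathlib

section
/- Let X be a metric space and σ a doubling Borel measure on X. Let p ∈ (0,∞), λ ≥ 2 and c₁ > 0, and let B = B(x₀,r) be a ball in X such that σ(λB ∖ B) ≥ c₁ σ(B). Then there exists a constant C > 0, depending only on p, λ, c₁ and the doubling constant of σ, such that for every σ-measurable function f : X → ℝ with supp f ⊂ B and every Hajłasz gradient g ∈ D(f), one has ∫_B |f|^p dσ ≤ C r^p ∫_{λB} g^p dσ. -/
open MeasureTheory Metric ENNReal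

/-- `g` is a Hajłasz gradient of `f` with respect to the measure `σ`:
`g` is nonnegative, measurable, and the Hajłasz inequality holds off a `σ`-null set. -/
def IsHajlaszGradient {X : Type} [MetricSpace X] [MeasurableSpace X]
    (σ : Measure X) (f g : X → ℝ) : Prop :=
  Measurable g ∧ (∀ x, 0 ≤ g x) ∧
    ∃ N : Set X, σ N = 0 ∧
      ∀ x, x ∉ N → ∀ y, y ∉ N → |f x - f y| ≤ dist x y * (g x + g y)

/-!
Fix a point `x ∈ B` and let `y` range over the annulus `A = λB ∖ B`, where `f` vanishes.
Since `d(x, y) ≤ (1 + λ) r`, the Hajłasz inequality gives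
`|f x|^p ≤ (2 (1 + λ) r)^p (g x^p + g y^p)`, and taking the essential infimum over `y ∈ A`
replaces `g y^p` by `t = ess inf_A g^p`. Integrating over `B`, the second term is
`t σ(B) ≤ c₁⁻¹ t σ(A) ≤ c₁⁻¹ ∫_A g^p`; the essential infimum (rather than the mean over `A`)
keeps this valid when `σ(A) = ∞`.
-/

namespace ENNReal

theorem rpow_le_two_mul_rpow_mul_add_rpow {a b c R : ℝ≥0∞} {p : ℝ} (hp : 0 ≤ p)
    (h : a ≤ R * (b + c)) : a ^ p ≤ (2 * R) ^ p * (b ^ p + c ^ p) :=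
  calc a ^ p ≤ (R * (b + c)) ^ p := rpow_le_rpow h hp
    _ = R ^ p * (b + c) ^ p := mul_rpow_of_nonneg _ _ hp
    _ ≤ R ^ p * (2 ^ p * (b ^ p + c ^ p)) := by
        gcongr; exact add_rpow_le_two_rpow_mul_rpow_add_rpow _ _ hp
    _ = (2 * R) ^ p * (b ^ p + c ^ p) := by rw [mul_rpow_of_nonneg _ _ hp]; ring

end ENNReal

section EssInf

variable {Y : Type*} [MeasurableSpace Y]

theorem essInf_mul_measure_univ_le_lintegral (ν : Measure Y) (G : Y → ℝ≥0∞) :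
    essInf G ν * ν Set.univ ≤ ∫⁻ y, G y ∂ν :=
  calc essInf G ν * ν Set.univ = ∫⁻ _, essInf G ν ∂ν := (lintegral_const _).symm
    _ ≤ ∫⁻ y, G y ∂ν := lintegral_mono_ae ae_essInf_le

theorem le_mul_add_essInf_of_ae_le {ν : Measure Y} {G : Y → ℝ≥0∞} {a b K : ℝ≥0∞}
    (hK₀ : K ≠ 0) (hK : K ≠ ∞) (h : ∀ᵐ y ∂ν, a ≤ K * (b + G y)) :
    a ≤ K * (b + essInf G ν) := by
  -- `a ≤ K * (b + t)` is equivalent to the lower bound `a / K - b ≤ t` on `t`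
  rw [mul_comm, ← ENNReal.div_le_iff hK₀ hK, ← tsub_le_iff_left]
  refine le_essInf_of_ae_le _ ?_
  filter_upwards [h] with y hy
  rwa [tsub_le_iff_left, ENNReal.div_le_iff hK₀ hK, mul_comm]

end EssInf

theorem ofReal_abs_rpow_le_of_hajlasz {X : Type*} [PseudoMetricSpace X] {f g : X → ℝ} {x y : X} {p R : ℝ} (hp : 0 ≤ p)
    (hgx : 0 ≤ g x) (hgy : 0 ≤ g y) (hfy : f y = 0)
    (hH : |f x - f y| ≤ dist x y * (g x + g y)) (hd : dist x y ≤ R) :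
    ENNReal.ofReal (|f x| ^ p) ≤
      ENNReal.ofReal ((2 * R) ^ p) * (ENNReal.ofReal (g x ^ p) + ENNReal.ofReal (g y ^ p)) := by
  have hR : 0 ≤ R := dist_nonneg.trans hd
  rw [← ofReal_rpow_of_nonneg (abs_nonneg _) hp, ← ofReal_rpow_of_nonneg (by positivity) hp,
    ← ofReal_rpow_of_nonneg hgx hp, ← ofReal_rpow_of_nonneg hgy hp,
    ENNReal.ofReal_mul zero_le_two, ENNReal.ofReal_ofNat]
  refine ENNReal.rpow_le_two_mul_rpow_mul_add_rpow hp ?_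
  rw [← ENNReal.ofReal_add hgx hgy, ← ENNReal.ofReal_mul hR]
  refine ENNReal.ofReal_le_ofReal ?_
  rw [hfy, sub_zero] at hH
  exact hH.trans (by gcongr)

theorem lintegral_rpow_le_of_isHajlaszGradient {X : Type} [MetricSpace X] [MeasurableSpace X]
    {σ : Measure X} {f g : X → ℝ} {p R : ℝ}
    {B A E : Set X} {c : ℝ≥0∞} (hp : 0 ≤ p) (hR : 0 < R) (hc₀ : c ≠ 0) (hc : c ≠ ∞)
    (hB : MeasurableSet B) (hA : MeasurableSet A) (hBE : B ⊆ E) (hAE : A ⊆ E)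
    (hBA : c * σ B ≤ σ A) (hdist : ∀ x ∈ B, ∀ y ∈ A, dist x y ≤ R)
    (hf : ∀ y ∈ A, f y = 0) (hg : IsHajlaszGradient σ f g) :
    ∫⁻ x in B, ENNReal.ofReal (|f x| ^ p) ∂σ ≤
      ENNReal.ofReal ((2 * R) ^ p) * (1 + c⁻¹) * ∫⁻ x in E, ENNReal.ofReal (g x ^ p) ∂σ := by
  obtain ⟨hgm, hg₀, N, hN, hH⟩ := hg
  set G : X → ℝ≥0∞ := fun x => ENNReal.ofReal (g x ^ p)
  set K := ENNReal.ofReal ((2 * R) ^ p)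
  set t := essInf G (σ.restrict A)
  have hGm : Measurable G := ENNReal.measurable_ofReal.comp (by fun_prop)
  have hK₀ : K ≠ 0 := by positivity
  have hNc : ∀ᵐ x ∂σ, x ∉ N := measure_eq_zero_iff_ae_notMem.1 hN
  have hpointwise : ∀ᵐ x ∂σ.restrict B, ENNReal.ofReal (|f x| ^ p) ≤ K * (G x + t) := by
    filter_upwards [ae_restrict_mem hB, ae_restrict_of_ae hNc] with x hx hxN
    refine le_mul_add_essInf_of_ae_le hK₀ ofReal_ne_top ?_
    filter_upwards [ae_restrict_mem hA, ae_restrict_of_ae hNc] with y hy hyN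
    exact ofReal_abs_rpow_le_of_hajlasz hp (hg₀ x) (hg₀ y) (hf y hy) (hH x hxN y hyN)
      (hdist x hx y hy)
  have hessInf : t * σ B ≤ (∫⁻ x in E, G x ∂σ) * c⁻¹ :=
    calc t * σ B ≤ t * σ A * c⁻¹ := by
          rw [mul_assoc, ← div_eq_mul_inv]
          gcongr
          exact (ENNReal.le_div_iff_mul_le (.inl hc₀) (.inl hc)).2 (by rwa [mul_comm])
      _ ≤ (∫⁻ x in A, G x ∂σ) * c⁻¹ := by
          gcongr
          simpa using essInf_mul_measure_univ_le_lintegral (σ.restrict A) G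
      _ ≤ (∫⁻ x in E, G x ∂σ) * c⁻¹ := by gcongr
  calc ∫⁻ x in B, ENNReal.ofReal (|f x| ^ p) ∂σ
      ≤ ∫⁻ x in B, K * (G x + t) ∂σ := lintegral_mono_ae hpointwise
    _ = K * (∫⁻ x in B, G x ∂σ + t * σ B) := by
        rw [lintegral_const_mul _ (hGm.add_const t), lintegral_add_right _ measurable_const,
          setLIntegral_const]
    _ ≤ K * (∫⁻ x in E, G x ∂σ + (∫⁻ x in E, G x ∂σ) * c⁻¹) := by
        gcongr
    _ = K * (1 + c⁻¹) * ∫⁻ x in E, G x ∂σ := by ring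

theorem stmt_0_general (p lam c₁ Cσ : ℝ) (hp : 0 < p) (hlam : 2 ≤ lam) (hc₁ : 0 < c₁) :
    ∃ C : ℝ, 0 < C ∧
      ∀ (X : Type) [MetricSpace X] [MeasurableSpace X] [BorelSpace X] (σ : Measure X),
        (∀ (x : X) (r : ℝ), 0 < r → σ (ball x (2 * r)) ≤ ENNReal.ofReal Cσ * σ (ball x r)) →
        (∀ (x : X) (r : ℝ), 0 < r → 0 < σ (ball x r)) →
        ∀ (x₀ : X) (r : ℝ), 0 < r →
          ENNReal.ofReal c₁ * σ (ball x₀ r) ≤ σ (ball x₀ (lam * r) \ ball x₀ r) →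
          ∀ f g : X → ℝ, Measurable f → (∀ x, x ∉ ball x₀ r → f x = 0) →
            IsHajlaszGradient σ f g →
            ∫⁻ x in ball x₀ r, ENNReal.ofReal (|f x| ^ p) ∂σ ≤
              ENNReal.ofReal (C * r ^ p) *
                ∫⁻ x in ball x₀ (lam * r), ENNReal.ofReal (g x ^ p) ∂σ := by
  refine ⟨(2 * (1 + lam)) ^ p * (1 + c₁⁻¹), by positivity, ?_⟩
  intro X _ _ _ σ _ _ x₀ r hr hannulus f g _ hsupp hg
  have hdist : ∀ x ∈ ball x₀ r, ∀ y ∈ ball x₀ (lam * r) \ ball x₀ r,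
      dist x y ≤ (1 + lam) * r := fun x hx y hy => by
    have := dist_triangle_right x y x₀
    linarith [mem_ball.1 hx, mem_ball.1 hy.1]
  have hconst : ENNReal.ofReal ((2 * (1 + lam)) ^ p * (1 + c₁⁻¹) * r ^ p) =
      ENNReal.ofReal ((2 * ((1 + lam) * r)) ^ p) * (1 + (ENNReal.ofReal c₁)⁻¹) := by
    rw [← ofReal_inv_of_pos hc₁, ← ENNReal.ofReal_one, ← ENNReal.ofReal_add zero_le_one
      (by positivity), ← ENNReal.ofReal_mul (by positivity), ← mul_assoc,
      Real.mul_rpow (by positivity) hr.le]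
    ring_nf
  rw [hconst]
  exact lintegral_rpow_le_of_isHajlaszGradient hp.le (by positivity) (by positivity)
    ofReal_ne_top measurableSet_ball (measurableSet_ball.diff measurableSet_ball)
    (ball_subset_ball (le_mul_of_one_le_left hr.le (by linarith))) Set.sdiff_subset hannulus
    hdist (fun y hy => hsupp y hy.2) hg

/-- Poincaré inequality for compactly supported Hajłasz–Sobolev
functions: if `σ(λB ∖ B) ≥ c₁ σ(B)` then `∫_B |f|^p dσ ≤ C r^p ∫_{λB} g^p dσ`
for every `f` supported in `B` and every Hajłasz gradient `g` of `f`, with `C`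
depending only on `p`, `λ`, `c₁` and the doubling constant of `σ`. -/
theorem stmt_0 (p lam c₁ Cσ : ℝ) (hp : 0 < p) (hlam : 2 ≤ lam) (hc₁ : 0 < c₁)
    (hCσ : 1 ≤ Cσ) :
    ∃ C : ℝ, 0 < C ∧
      ∀ (X : Type) [MetricSpace X] [MeasurableSpace X] [BorelSpace X] (σ : Measure X),
        (∀ (x : X) (r : ℝ), 0 < r → σ (ball x (2 * r)) ≤ ENNReal.ofReal Cσ * σ (ball x r)) →
        (∀ (x : X) (r : ℝ), 0 < r → 0 < σ (ball x r)) →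
        ∀ (x₀ : X) (r : ℝ), 0 < r →
          ENNReal.ofReal c₁ * σ (ball x₀ r) ≤ σ (ball x₀ (lam * r) \ ball x₀ r) →
          ∀ f g : X → ℝ, Measurable f → (∀ x, x ∉ ball x₀ r → f x = 0) →
            IsHajlaszGradient σ f g →
            ∫⁻ x in ball x₀ r, ENNReal.ofReal (|f x| ^ p) ∂σ ≤
              ENNReal.ofReal (C * r ^ p) *
                ∫⁻ x in ball x₀ (lam * r), ENNReal.ofReal (g x ^ p) ∂σ :=
  stmt_0_general p lam c₁ Cσ hp hlam hc₁
end

section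
/- Let X be a metric space that is uniformly perfect with constant λ₀ ≥ 2, and let σ be a doubling Borel measure on X that is positive on every ball. Then there exist λ ≥ λ₀ and c > 0, depending only on λ₀ and the doubling constant of σ, such that σ(λB ∖ B) ≥ c σ(λB) for every ball B ⊂ X with λB ≠ X. -/
open MeasureTheory Metric ENNReal

lemma doubling_iter {X : Type} [MetricSpace X] [MeasurableSpace X]
    (σ : Measure X) (Cσ : ℝ)
    (hdbl : ∀ (x : X) (r : ℝ), 0 < r → σ (ball x (2 * r)) ≤ ENNReal.ofReal Cσ * σ (ball x r))
    (y : X) (k : ℕ) (t : ℝ) (ht : 0 < t) :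
    σ (ball y ((2 : ℝ) ^ k * t)) ≤ (ENNReal.ofReal Cσ) ^ k * σ (ball y t) := by
  induction k with
  | zero => simp
  | succ k ih =>
    have h2 : (2 : ℝ) ^ (k + 1) * t = 2 * ((2 : ℝ) ^ k * t) := by ring
    rw [h2]
    calc σ (ball y (2 * ((2 : ℝ) ^ k * t)))
        ≤ ENNReal.ofReal Cσ * σ (ball y ((2 : ℝ) ^ k * t)) :=
          hdbl y _ (by positivity)
      _ ≤ ENNReal.ofReal Cσ * ((ENNReal.ofReal Cσ) ^ k * σ (ball y t)) := by
          exact mul_le_mul_right ih _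
      _ = (ENNReal.ofReal Cσ) ^ (k + 1) * σ (ball y t) := by ring

/-- If `X` is uniformly perfect with constant `λ₀ ≥ 2` and `σ` is a
doubling measure positive on balls, then there are `λ ≥ λ₀` and `c > 0`, depending only
on `λ₀` and the doubling constant, such that `σ(λB ∖ B) ≥ c σ(λB)` for every ball `B`
with `λB ≠ X`. -/
theorem stmt_1 (lam₀ Cσ : ℝ) (hlam₀ : 2 ≤ lam₀) (hCσ : 1 ≤ Cσ) :
    ∃ lam c : ℝ, lam₀ ≤ lam ∧ 0 < c ∧
      ∀ (X : Type) [MetricSpace X] [MeasurableSpace X] [BorelSpace X] (σ : Measure X),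
        (∀ (x : X) (r : ℝ), 0 < r → σ (ball x (2 * r)) ≤ ENNReal.ofReal Cσ * σ (ball x r)) →
        (∀ (x : X) (r : ℝ), 0 < r → 0 < σ (ball x r)) →
        (∀ (x : X) (r : ℝ), 0 < r → ball x (lam₀ * r) ≠ Set.univ →
          (ball x (lam₀ * r) \ ball x r).Nonempty) →
        ∀ (x : X) (r : ℝ), 0 < r → ball x (lam * r) ≠ Set.univ →
          ENNReal.ofReal c * σ (ball x (lam * r)) ≤ σ (ball x (lam * r) \ ball x r) := by
  obtain ⟨k, hk⟩ : ∃ k : ℕ, 8 * lam₀ < 2 ^ k := pow_unbounded_of_one_lt _ one_lt_two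
  have hCσ0 : (0 : ℝ) < Cσ := lt_of_lt_of_le one_pos hCσ
  refine ⟨2 * lam₀, (Cσ⁻¹) ^ k, le_mul_of_one_le_left (by linarith) one_le_two,
    by positivity, ?_⟩
  intro X _ _ _ σ hdbl _ hUP x r hr hne
  have hlam₀0 : (0 : ℝ) < lam₀ := by linarith
  -- apply uniform perfectness at scale 3r/2
  have hsub : ball x (lam₀ * (3 * r / 2)) ⊆ ball x (2 * lam₀ * r) :=
    ball_subset_ball (by nlinarith)
  have hne' : ball x (lam₀ * (3 * r / 2)) ≠ Set.univ := by
    intro h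
    exact hne (Set.eq_univ_of_univ_subset (h ▸ hsub))
  obtain ⟨y, hy1, hy2⟩ := hUP x (3 * r / 2) (by linarith) hne'
  rw [mem_ball] at hy1
  rw [mem_ball, not_lt] at hy2
  -- B(y, r/2) ⊆ λB \ B
  have hsub1 : ball y (r / 2) ⊆ ball x (2 * lam₀ * r) \ ball x r := by
    intro z hz
    rw [mem_ball] at hz
    constructor
    · rw [mem_ball]
      have h1 := dist_triangle z y x
      nlinarith
    · rw [mem_ball, not_lt]
      have h1 := dist_triangle y z x
      have h2 : dist y z < r / 2 := by rwa [dist_comm] at hz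
      have h3 := dist_triangle y z x
      nlinarith [dist_comm z x ▸ h1]
  -- λB ⊆ B(y, 4 λ₀ r)
  have hsub2 : ball x (2 * lam₀ * r) ⊆ ball y ((2:ℝ) ^ k * (r / 2)) := by
    intro z hz
    rw [mem_ball] at hz ⊢
    have h1 := dist_triangle z x y
    have h4 : dist x y < lam₀ * (3 * r / 2) := by rwa [dist_comm] at hy1
    have h8 : 2 * lam₀ * r + lam₀ * (3 * r / 2) ≤ (2:ℝ) ^ k * (r / 2) := by nlinarith
    linarith
  calc ENNReal.ofReal ((Cσ⁻¹) ^ k) * σ (ball x (2 * lam₀ * r))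
      ≤ ENNReal.ofReal ((Cσ⁻¹) ^ k) * σ (ball y ((2:ℝ) ^ k * (r / 2))) :=
        mul_le_mul_right (measure_mono hsub2) _
    _ ≤ ENNReal.ofReal ((Cσ⁻¹) ^ k) * ((ENNReal.ofReal Cσ) ^ k * σ (ball y (r / 2))) :=
        mul_le_mul_right (doubling_iter σ Cσ hdbl y k (r / 2) (by linarith)) _
    _ = (ENNReal.ofReal ((Cσ⁻¹) ^ k) * (ENNReal.ofReal Cσ) ^ k) * σ (ball y (r / 2)) := by
        ring
    _ = σ (ball y (r / 2)) := by
        rw [← ENNReal.ofReal_pow hCσ0.le, ← ENNReal.ofReal_mul (by positivity),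
          ← mul_pow, inv_mul_cancel₀ hCσ0.ne', one_pow, ENNReal.ofReal_one, one_mul]
    _ ≤ σ (ball x (2 * lam₀ * r) \ ball x r) := measure_mono hsub1
end
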